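/- For all positive integers s and n, the sum of the coefficients of ∏_{j=1}^{n}(1−q^j)^s at exponents divisible by n+1 equals (n+1)^{s−1}·φ(n+1); that is, M_{s,n,n+1}(0) = Σ_{0 ≤ i ≤ N_{s,n}, (n+1) | i} t_{i,s,n} = (n+1)^{s−1}·φ(n+1), where φ is Euler's totient function. -/

import Mathlib

/-- `T s n` is the polynomial `∏_{j=1}^{n} (1 - q^j)^s`. -/
noncomputable def T (s n : ℕ) : Polynomial ℤ :=
  ∏ j ∈ Finset.Icc 1 n, (1 - Polynomial.X ^ j) ^ s

/-- `Nsn s n = s·n(n+1)/2`, the degree of `T s n`. -/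
def Nsn (s n : ℕ) : ℕ := s * n * (n + 1) / 2

/-- `M s n N j = Σ_{0 ≤ i ≤ N_{s,n}, i ≡ j (mod N)} t_{i,s,n}`. -/
noncomputable def M (s n N j : ℕ) : ℤ :=
  ∑ i ∈ (Finset.range (Nsn s n + 1)).filter (fun i => i % N = j), (T s n).coeff i

/-!
Roots of unity filter: for a primitive `(n+1)`-th root of unity `ζ`, the sum
`∑_{k ≤ n} T(ζ^k)` is `n+1` times the sum of the coefficients of `T` at multiples of `n+1`.
On the other hand `T(ζ^k) = (∏_{j=1}^n (1 - ζ^{kj}))^s`: when `ζ^k` is primitive the product is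
`n+1` (the cyclotomic polynomial `1 + x + ⋯ + x^n` evaluated at `1`), and otherwise the order of
`ζ^k` lies in `[1, n]` and the corresponding factor vanishes. Hence the sum is `φ(n+1)(n+1)^s`.
-/

open Polynomial Finset

lemma sum_Icc_one_id_mul_two (n : ℕ) : (∑ j ∈ Icc 1 n, j) * 2 = n * (n + 1) := by
  induction n with
  | zero => simp
  | succ n ih => rw [sum_Icc_succ_top (by omega), add_mul, ih]; ring

lemma natDegree_T_le (s n : ℕ) : (T s n).natDegree ≤ Nsn s n := by
  calc (T s n).natDegree
      ≤ ∑ j ∈ Icc 1 n, ((1 - X ^ j : ℤ[X]) ^ s).natDegree := natDegree_prod_le _ _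
    _ ≤ ∑ j ∈ Icc 1 n, s * j := by
      refine sum_le_sum fun j _ => natDegree_pow_le.trans (Nat.mul_le_mul_left s ?_)
      exact (natDegree_sub_le _ _).trans (by simp)
    _ ≤ Nsn s n := by
      rw [Nsn, Nat.le_div_iff_mul_le two_pos, ← mul_sum, mul_assoc, sum_Icc_one_id_mul_two,
        mul_assoc]

lemma aeval_T {K : Type*} [CommRing K] (s n : ℕ) (x : K) :
    aeval x (T s n) = (∏ j ∈ Icc 1 n, (1 - x ^ j)) ^ s := by
  simp [T, prod_pow]

lemma prod_Icc_one_sub_pow_eq_zero_of_not_isPrimitiveRoot {K : Type*} [CommRing K] {x : K}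
    {n : ℕ} (hx : x ^ (n + 1) = 1) (hprim : ¬IsPrimitiveRoot x (n + 1)) :
    ∏ j ∈ Icc 1 n, (1 - x ^ j) = 0 := by
  have hpos : 0 < orderOf x :=
    orderOf_pos_iff.mpr (isOfFinOrder_iff_pow_eq_one.mpr ⟨_, n.succ_pos, hx⟩)
  have hle : orderOf x ≤ n + 1 := orderOf_le_of_pow_eq_one n.succ_pos hx
  have hne : orderOf x ≠ n + 1 := fun h => hprim (h ▸ IsPrimitiveRoot.orderOf x)
  exact prod_eq_zero (mem_Icc.mpr ⟨hpos, by omega⟩) (by rw [pow_orderOf_eq_one, sub_self])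

section RootsOfUnity

variable {K : Type*} [CommRing K] [IsDomain K]

lemma IsPrimitiveRoot.prod_Icc_one_sub_pow_eq_order {ζ : K} {n : ℕ}
    (hζ : IsPrimitiveRoot ζ (n + 1)) :
    ∏ j ∈ Icc 1 n, (1 - ζ ^ j) = n + 1 := by
  rw [← hζ.prod_one_sub_pow_eq_order, ← Ico_add_one_right_eq_Icc, prod_Ico_eq_prod_range]
  simp [add_comm]

lemma IsPrimitiveRoot.geom_sum_pow_eq {ζ : K} {N : ℕ} (hζ : IsPrimitiveRoot ζ N) (i : ℕ) :
    ∑ k ∈ range N, (ζ ^ i) ^ k = if N ∣ i then (N : K) else 0 := by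
  split_ifs with h
  · simp [(hζ.pow_eq_one_iff_dvd i).mpr h]
  · have hne : ζ ^ i - 1 ≠ 0 := sub_ne_zero.mpr fun h' => h ((hζ.pow_eq_one_iff_dvd i).mp h')
    refine (mul_eq_zero.mp ?_).resolve_right hne
    rw [geom_sum_mul, ← pow_mul, mul_comm, pow_mul, hζ.pow_eq_one, one_pow, sub_self]

theorem IsPrimitiveRoot.sum_aeval_pow {R : Type*} [CommRing R] [Algebra R K] {ζ : K} {N D : ℕ}
    (hζ : IsPrimitiveRoot ζ N) {p : R[X]} (hp : p.natDegree < D) :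
    ∑ k ∈ range N, aeval (ζ ^ k) p =
      N * ∑ i ∈ range D with i % N = 0, algebraMap R K (p.coeff i) := by
  simp_rw [aeval_eq_sum_range' hp, Algebra.smul_def]
  rw [sum_comm, sum_filter, mul_sum]
  refine sum_congr rfl fun i _ => ?_
  simp_rw [← pow_mul, mul_comm _ i, pow_mul, ← mul_sum, hζ.geom_sum_pow_eq,
    ← Nat.dvd_iff_mod_eq_zero]
  split_ifs <;> ring

theorem IsPrimitiveRoot.sum_aeval_T {ζ : K} {s n : ℕ} (hζ : IsPrimitiveRoot ζ (n + 1))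
    (hs : s ≠ 0) :
    ∑ k ∈ range (n + 1), aeval (ζ ^ k) (T s n) = (n + 1).totient * (n + 1) ^ s := by
  have hterm (k : ℕ) :
      aeval (ζ ^ k) (T s n) = if (n + 1).Coprime k then (n + 1 : K) ^ s else 0 := by
    rw [aeval_T]
    split_ifs with h
    · rw [(hζ.pow_of_coprime k h.symm).prod_Icc_one_sub_pow_eq_order]
    · rw [prod_Icc_one_sub_pow_eq_zero_of_not_isPrimitiveRoot, zero_pow hs]
      · rw [← pow_mul, mul_comm, pow_mul, hζ.pow_eq_one, one_pow]
      · rw [hζ.pow_iff_coprime n.succ_pos]; exact fun h' => h h'.symm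
  rw [sum_congr rfl fun k _ => hterm k, ← sum_filter, sum_const, nsmul_eq_mul,
    Nat.totient_eq_card_coprime]

end RootsOfUnity

theorem stmt6_general (s n : ℕ) (hs : 0 < s) :
    M s n (n + 1) 0 = (n + 1 : ℤ) ^ (s - 1) * (Nat.totient (n + 1) : ℤ) := by
  obtain ⟨ζ, hζ⟩ : ∃ ζ : ℂ, IsPrimitiveRoot ζ (n + 1) :=
    ⟨_, Complex.isPrimitiveRoot_exp _ n.succ_ne_zero⟩
  have hM : (n + 1 : ℂ) * M s n (n + 1) 0 = (n + 1) * ((n + 1) ^ (s - 1) * (n + 1).totient) :=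
    calc (n + 1 : ℂ) * M s n (n + 1) 0
        = ∑ k ∈ range (n + 1), aeval (ζ ^ k) (T s n) := by
          rw [hζ.sum_aeval_pow ((natDegree_T_le s n).trans_lt (Nat.lt_add_one _)), M]
          simp
      _ = (n + 1) * ((n + 1) ^ (s - 1) * (n + 1).totient) := by
          rw [hζ.sum_aeval_T hs.ne', ← pow_sub_one_mul hs.ne']
          ring
  exact_mod_cast mul_left_cancel₀ n.cast_add_one_ne_zero hM

/-- Theorem (main1, `j = 0` case): the sum of coefficients of `∏_{j=1}^{n}(1-q^j)^s` at
exponents divisible by `n+1` equals `(n+1)^{s-1}·φ(n+1)`. -/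
theorem stmt6 (s n : ℕ) (hs : 0 < s) (hn : 0 < n) :
    M s n (n + 1) 0 = (n + 1 : ℤ) ^ (s - 1) * (Nat.totient (n + 1) : ℤ) :=
  stmt6_general s n hs
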